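/- arXiv:1006.3924 — 7 statements merged into one kernel-verified Lean document; each statement's English description precedes it below -/
import Mathlib

section
/- Let n ≥ 1 and let A and B be Hermitian n×n complex matrices. Then the trace of exp(A + t•B) is a positive real number for every real t, and the function t ↦ log Tr exp(A + t•B) (taking the real part of the trace) is convex on ℝ. -/
/-!
Peierls' inequality `∑ i, exp (M i i) ≤ Tr exp M` for Hermitian `M` is Jensen's inequality for
`exp`, applied row by row in the eigenbasis of `M` (the rows of a unitary are probability vectors
after taking `normSq`). Applied to `H + K` written in the eigenbasis of `H`, and followed by Jensen
once more with the Gibbs weights `exp λᵢ / Tr exp H`, it gives the Peierls–Bogoliubov inequality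
`log Tr exp (H + K) ≥ log Tr exp H + Tr (exp H * K) / Tr exp H`. With `H = A + u B` and
`K = (s - u) B` this is a supporting line at `u` of `t ↦ log Tr exp (A + t B)`, so the function is
convex. Positivity comes from `Tr exp M = ∑ i, exp λᵢ`.
-/

open Matrix

lemma Real.log_sum_exp_add_le {ι : Type*} (s : Finset ι) (hs : s.Nonempty) (a k : ι → ℝ) :
    Real.log (∑ i ∈ s, Real.exp (a i)) +
        (∑ i ∈ s, Real.exp (a i) * k i) / ∑ i ∈ s, Real.exp (a i) ≤
      Real.log (∑ i ∈ s, Real.exp (a i + k i)) := by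
  set Z := ∑ i ∈ s, Real.exp (a i)
  have hZ : 0 < Z := Finset.sum_pos (fun i _ => Real.exp_pos _) hs
  have hjensen := convexOn_exp.map_sum_le (t := s) (w := fun i => Real.exp (a i) / Z) (p := k)
    (fun i _ => by positivity) (by rw [← Finset.sum_div, div_self hZ.ne'])
    (fun i _ => Set.mem_univ _)
  simp only [smul_eq_mul, div_mul_eq_mul_div, ← Finset.sum_div, ← Real.exp_add] at hjensen
  rw [← Real.le_log_iff_exp_le (by positivity), Real.log_div (by positivity) hZ.ne'] at hjensen
  linarith

namespace Matrix

open Unitary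

variable {ι : Type*} [Fintype ι] [DecidableEq ι]

lemma exp_conjStarAlgAut (U : unitaryGroup ι ℂ) (M : Matrix ι ι ℂ) :
    NormedSpace.exp (conjStarAlgAut ℂ _ U M) = conjStarAlgAut ℂ _ U (NormedSpace.exp M) := by
  have hU : IsUnit (U : Matrix ι ι ℂ) := (Unitary.toUnits U).isUnit
  have hinv : (U : Matrix ι ι ℂ)⁻¹ = star (U : Matrix ι ι ℂ) :=
    inv_eq_left_inv (coe_star_mul_self U)
  simpa only [conjStarAlgAut_apply, hinv] using exp_conj (U : Matrix ι ι ℂ) M hU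

lemma trace_conjStarAlgAut (U : unitaryGroup ι ℂ) (M : Matrix ι ι ℂ) :
    (conjStarAlgAut ℂ _ U M).trace = M.trace := by
  rw [conjStarAlgAut_apply, trace_mul_cycle, coe_star_mul_self, one_mul]

lemma trace_exp_conjStarAlgAut (U : unitaryGroup ι ℂ) (M : Matrix ι ι ℂ) :
    (NormedSpace.exp (conjStarAlgAut ℂ _ U M)).trace = (NormedSpace.exp M).trace := by
  rw [exp_conjStarAlgAut, trace_conjStarAlgAut]

lemma sum_normSq_unitaryGroup_apply_eq_one (U : unitaryGroup ι ℂ) (i : ι) :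
    ∑ j, Complex.normSq ((U : Matrix ι ι ℂ) i j) = 1 := by
  have h := congrArg (fun M : Matrix ι ι ℂ => (M i i).re) (coe_mul_star_self U)
  simp only [mul_apply, one_apply_eq, Complex.one_re, Complex.re_sum, coe_star,
    star_apply, Complex.star_def, Complex.mul_conj, Complex.ofReal_re] at h
  exact h

lemma re_conjStarAlgAut_diagonal_apply_self (U : unitaryGroup ι ℂ) (d : ι → ℝ) (i : ι) :
    (conjStarAlgAut ℂ _ U (diagonal (RCLike.ofReal ∘ d)) i i).re =
      ∑ j, Complex.normSq ((U : Matrix ι ι ℂ) i j) * d j := by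
  rw [conjStarAlgAut_apply, mul_apply, Complex.re_sum]
  refine Finset.sum_congr rfl fun j _ => ?_
  rw [mul_diagonal, star_apply, mul_right_comm, Complex.star_def, Complex.mul_conj]
  simp

namespace IsHermitian

variable {M : Matrix ι ι ℂ}

lemma exp_eq_conjStarAlgAut_diagonal (hM : M.IsHermitian) :
    NormedSpace.exp M = conjStarAlgAut ℂ _ hM.eigenvectorUnitary
      (diagonal (RCLike.ofReal ∘ Real.exp ∘ hM.eigenvalues)) := by
  conv_lhs => rw [hM.spectral_theorem]
  rw [exp_conjStarAlgAut, exp_diagonal]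
  congr 2
  funext i
  simp [← Complex.exp_eq_exp_ℂ, Complex.ofReal_exp]

lemma trace_exp (hM : M.IsHermitian) :
    (NormedSpace.exp M).trace = ((∑ i, Real.exp (hM.eigenvalues i) : ℝ) : ℂ) := by
  rw [hM.exp_eq_conjStarAlgAut_diagonal, trace_conjStarAlgAut, trace_diagonal]
  simp

lemma re_trace_exp_pos [Nonempty ι] (hM : M.IsHermitian) : 0 < (NormedSpace.exp M).trace.re := by
  rw [hM.trace_exp, Complex.ofReal_re]
  positivity

/-- **Peierls inequality** -/
lemma sum_exp_re_diag_le_re_trace_exp (hM : M.IsHermitian) :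
    ∑ i, Real.exp (M i i).re ≤ (NormedSpace.exp M).trace.re := by
  set U := hM.eigenvectorUnitary
  rw [hM.exp_eq_conjStarAlgAut_diagonal, trace, Complex.re_sum]
  refine Finset.sum_le_sum fun i _ => ?_
  conv_lhs => rw [hM.spectral_theorem]
  rw [diag_apply, re_conjStarAlgAut_diagonal_apply_self, re_conjStarAlgAut_diagonal_apply_self]
  simpa only [smul_eq_mul, Function.comp_apply] using
    convexOn_exp.map_sum_le (fun j _ => Complex.normSq_nonneg _)
      (sum_normSq_unitaryGroup_apply_eq_one U i) (fun j _ => Set.mem_univ (hM.eigenvalues j))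

/-- **Peierls–Bogoliubov inequality** -/
lemma log_re_trace_exp_add_le [Nonempty ι] {H K : Matrix ι ι ℂ} (hH : H.IsHermitian)
    (hK : K.IsHermitian) :
    Real.log (NormedSpace.exp H).trace.re +
        (NormedSpace.exp H * K).trace.re / (NormedSpace.exp H).trace.re ≤
      Real.log (NormedSpace.exp (H + K)).trace.re := by
  set V := hH.eigenvectorUnitary
  set K' := conjStarAlgAut ℂ _ (star V) K
  have hZ : (NormedSpace.exp H).trace.re = ∑ i, Real.exp (hH.eigenvalues i) := by
    rw [hH.trace_exp, Complex.ofReal_re]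
  have hmean : (NormedSpace.exp H * K).trace.re =
      ∑ i, Real.exp (hH.eigenvalues i) * (K' i i).re := by
    have hKconj : K = conjStarAlgAut ℂ _ V K' := by
      simp only [K', ← conjStarAlgAut_symm, StarAlgEquiv.apply_symm_apply]
    rw [hH.exp_eq_conjStarAlgAut_diagonal, hKconj, ← map_mul, trace_conjStarAlgAut, trace,
      Complex.re_sum]
    simp [diagonal_mul, Complex.exp_ofReal_re]
  have hpeierls : ∑ i, Real.exp (hH.eigenvalues i + (K' i i).re) ≤
      (NormedSpace.exp (H + K)).trace.re := by
    have hN : conjStarAlgAut ℂ _ (star V) (H + K) =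
        diagonal (RCLike.ofReal ∘ hH.eigenvalues) + K' := by
      rw [map_add, hH.conjStarAlgAut_star_eigenvectorUnitary]
    have hNherm : (diagonal (RCLike.ofReal ∘ hH.eigenvalues) + K').IsHermitian :=
      hN ▸ (hH.add hK).isSelfAdjoint.map _
    rw [← trace_exp_conjStarAlgAut (star V), hN]
    simpa using hNherm.sum_exp_re_diag_le_re_trace_exp
  rw [hZ, hmean]
  exact (Real.log_sum_exp_add_le _ Finset.univ_nonempty _ _).trans
    (Real.log_le_log (by positivity) hpeierls)

end IsHermitian

end Matrix

lemma convexOn_univ_of_forall_exists_linear_le {E : Type*} [AddCommGroup E] [Module ℝ E]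
    {f : E → ℝ} (h : ∀ u, ∃ φ : E →ₗ[ℝ] ℝ, ∀ x, f u + φ (x - u) ≤ f x) :
    ConvexOn ℝ Set.univ f := by
  refine ⟨convex_univ, fun x _ y _ a b ha hb hab => ?_⟩
  set u := a • x + b • y
  obtain ⟨φ, hφ⟩ := h u
  have hbalance : a * φ (x - u) + b * φ (y - u) = 0 := by
    have : a • (x - u) + b • (y - u) = 0 := by
      linear_combination (norm := module) -hab • u
    rw [← smul_eq_mul, ← smul_eq_mul, ← map_smul, ← map_smul, ← map_add, this, map_zero]
  calc f u = a * (f u + φ (x - u)) + b * (f u + φ (y - u)) := by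
        linear_combination (-f u) * hab - hbalance
    _ ≤ a • f x + b • f y :=
        add_le_add (mul_le_mul_of_nonneg_left (hφ x) ha) (mul_le_mul_of_nonneg_left (hφ y) hb)

/-- For Hermitian complex matrices `A`, `B`, the trace of `exp (A + t • B)` is a positive
real number for every real `t`, and `t ↦ log (Tr exp (A + t • B))` is convex on `ℝ`. -/
theorem trace_exp_pos_and_log_trace_exp_convex
    (n : ℕ) (hn : 1 ≤ n) (A B : Matrix (Fin n) (Fin n) ℂ)
    (hA : A.IsHermitian) (hB : B.IsHermitian) :
    (∀ t : ℝ,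
      0 < ((NormedSpace.exp (A + (t : ℂ) • B)).trace).re ∧
      ((NormedSpace.exp (A + (t : ℂ) • B)).trace).im = 0) ∧
    ConvexOn ℝ Set.univ
      (fun t : ℝ => Real.log ((NormedSpace.exp (A + (t : ℂ) • B)).trace).re) := by
  have : Nonempty (Fin n) := ⟨⟨0, hn⟩⟩
  have hsmul : ∀ t : ℝ, ((t : ℂ) • B).IsHermitian := fun t =>
    hB.smul (Complex.conj_ofReal t)
  have hline : ∀ t : ℝ, (A + (t : ℂ) • B).IsHermitian := fun t => hA.add (hsmul t)
  refine ⟨fun t => ⟨(hline t).re_trace_exp_pos, by rw [(hline t).trace_exp, Complex.ofReal_im]⟩,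
    convexOn_univ_of_forall_exists_linear_le fun u => ?_⟩
  refine ⟨((NormedSpace.exp (A + (u : ℂ) • B) * B).trace.re /
    (NormedSpace.exp (A + (u : ℂ) • B)).trace.re) • LinearMap.id, fun s => ?_⟩
  have h := (hline u).log_re_trace_exp_add_le (hsmul (s - u))
  rwa [show A + (u : ℂ) • B + ((s - u : ℝ) : ℂ) • B = A + (s : ℂ) • B by push_cast; module,
    mul_smul_comm, trace_smul, smul_eq_mul, Complex.re_ofReal_mul, mul_div_assoc, mul_comm] at h
end

section
/- Let n ≥ 1 and let A and B be n×n complex matrices. For every real t₀, the function t ↦ Tr exp(A + t•B) from ℝ to ℂ is differentiable at t₀ with derivative Tr(B · exp(A + t₀•B)). -/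
/-!
If `τ` is a continuous linear functional on a Banach algebra with `τ (a * b) = τ (b * a)`,
cyclicity collapses the noncommutative derivative `h ↦ ∑ i, x ^ (k - i) * h * x ^ i` of
`x ↦ x ^ (k + 1)` to `h ↦ (k + 1) • τ (x ^ k * h)`. Differentiating the exponential series term
by term, which is legitimate because on the ball of radius `1` around `x₀` the derivatives are
dominated by `‖τ‖ * (‖x₀‖ + 1) ^ k / k !`, gives `D (τ ∘ exp) x = (h ↦ τ (exp x * h))`.
The theorem is the chain rule along `t ↦ A + t • B` with `τ` the matrix trace.
-/

open ContinuousLinearMap NormedSpace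
open scoped Nat

theorem inv_factorial_succ_mul_succ {K : Type*} [Field K] [CharZero K] (k : ℕ) :
    ((k + 1)! ⁻¹ : K) * (k + 1) = (k ! ⁻¹ : K) := by
  rw [Nat.factorial_succ, Nat.cast_mul, Nat.cast_succ, mul_inv, mul_comm, ← mul_assoc,
    mul_inv_cancel₀ (Nat.cast_add_one_ne_zero k), one_mul]

section TraceExp

variable {𝕂 𝔸 E : Type*} [RCLike 𝕂] [NormedRing 𝔸] [NormedAlgebra 𝕂 𝔸]
  [NormedAddCommGroup E] [NormedSpace 𝕂 E]

theorem ContinuousLinearMap.opNorm_mul_apply_pow_le (x : 𝔸) (k : ℕ) :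
    ‖mul 𝕂 𝔸 (x ^ k)‖ ≤ ‖x‖ ^ k := by
  induction k with
  | zero =>
    have hone : mul 𝕂 𝔸 (x ^ 0) = ContinuousLinearMap.id 𝕂 𝔸 := by ext y; simp
    rw [hone, pow_zero]
    exact norm_id_le
  | succ k ih =>
    have hcomp : mul 𝕂 𝔸 (x ^ (k + 1)) = (mul 𝕂 𝔸 x).comp (mul 𝕂 𝔸 (x ^ k)) := by
      ext y; simp only [comp_apply, mul_apply', pow_succ', mul_assoc]
    calc ‖mul 𝕂 𝔸 (x ^ (k + 1))‖ ≤ ‖mul 𝕂 𝔸 x‖ * ‖mul 𝕂 𝔸 (x ^ k)‖ :=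
          hcomp ▸ opNorm_comp_le _ _
      _ ≤ ‖x‖ * ‖x‖ ^ k := by gcongr; exact opNorm_mul_apply_le 𝕂 𝔸 x
      _ = ‖x‖ ^ (k + 1) := (pow_succ' _ _).symm

theorem hasFDerivAt_trace_pow_succ (τ : 𝔸 →L[𝕂] E) (hτ : ∀ a b, τ (a * b) = τ (b * a))
    (k : ℕ) (x : 𝔸) :
    HasFDerivAt (fun y => τ (y ^ (k + 1))) ((k + 1 : 𝕂) • τ.comp (mul 𝕂 𝔸 (x ^ k))) x := by
  refine (τ.hasFDerivAt.comp x (hasFDerivAt_pow' (k + 1))).congr_fderiv ?_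
  ext y
  have hcyc : ∀ i ∈ Finset.range (k + 1), τ (x ^ (k - i) * y * x ^ i) = τ (x ^ k * y) := by
    intro i hi
    rw [hτ, ← mul_assoc, ← pow_add, Nat.add_sub_cancel' (Finset.mem_range_succ_iff.mp hi)]
  simp [map_sum, Finset.sum_congr rfl hcyc, ← Nat.cast_smul_eq_nsmul 𝕂]

variable [CompleteSpace 𝔸]

theorem trace_exp_eq_tsum (τ : 𝔸 →L[𝕂] E) (x : 𝔸) :
    τ (exp x) = τ 1 + ∑' k : ℕ, ((k + 1)! ⁻¹ : 𝕂) • τ (x ^ (k + 1)) := by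
  rw [exp_eq_tsum 𝕂, τ.map_tsum (expSeries_summable' x),
    ((expSeries_summable' x).mapL τ).tsum_eq_zero_add]
  simp

theorem trace_comp_mul_exp_eq_tsum (τ : 𝔸 →L[𝕂] E) (x : 𝔸) :
    τ.comp (mul 𝕂 𝔸 (exp x)) = ∑' k : ℕ, (k ! ⁻¹ : 𝕂) • τ.comp (mul 𝕂 𝔸 (x ^ k)) := by
  rw [exp_eq_tsum 𝕂]
  simpa using ((compL 𝕂 𝔸 𝔸 E τ).comp (mul 𝕂 𝔸)).map_tsum (expSeries_summable' (𝕂 := 𝕂) x)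

theorem hasFDerivAt_trace_apply_exp [CompleteSpace E] (τ : 𝔸 →L[𝕂] E)
    (hτ : ∀ a b, τ (a * b) = τ (b * a)) (x₀ : 𝔸) :
    HasFDerivAt (fun x => τ (exp x)) (τ.comp (mul 𝕂 𝔸 (exp x₀))) x₀ := by
  have hderiv : ∀ (k : ℕ) (x : 𝔸), x ∈ Metric.ball x₀ 1 →
      HasFDerivAt (fun y => ((k + 1)! ⁻¹ : 𝕂) • τ (y ^ (k + 1)))
        ((k ! ⁻¹ : 𝕂) • τ.comp (mul 𝕂 𝔸 (x ^ k))) x := fun k x _ => by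
    refine ((hasFDerivAt_trace_pow_succ τ hτ k x).const_smul ((k + 1)! ⁻¹ : 𝕂)).congr_fderiv ?_
    rw [smul_smul, inv_factorial_succ_mul_succ]
  have hbound : ∀ (k : ℕ) (x : 𝔸), x ∈ Metric.ball x₀ 1 →
      ‖(k ! ⁻¹ : 𝕂) • τ.comp (mul 𝕂 𝔸 (x ^ k))‖ ≤ ‖τ‖ * ((‖x₀‖ + 1) ^ k / k !) := by
    intro k x hx
    have hx : ‖x‖ ≤ ‖x₀‖ + 1 := by
      have := norm_sub_norm_le x x₀
      have := mem_ball_iff_norm.mp hx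
      linarith
    calc ‖(k ! ⁻¹ : 𝕂) • τ.comp (mul 𝕂 𝔸 (x ^ k))‖
        ≤ (k ! : ℝ)⁻¹ * (‖τ‖ * ‖mul 𝕂 𝔸 (x ^ k)‖) := by
          rw [norm_smul, norm_inv, RCLike.norm_natCast]
          gcongr
          exact opNorm_comp_le _ _
      _ ≤ (k ! : ℝ)⁻¹ * (‖τ‖ * (‖x₀‖ + 1) ^ k) := by
          gcongr
          exact (opNorm_mul_apply_pow_le x k).trans (pow_le_pow_left₀ (norm_nonneg x) hx k)
      _ = ‖τ‖ * ((‖x₀‖ + 1) ^ k / k !) := by ring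
  have hsummable : Summable fun k : ℕ => ((k + 1)! ⁻¹ : 𝕂) • τ (x₀ ^ (k + 1)) :=
    (summable_nat_add_iff (f := fun k : ℕ => (k ! ⁻¹ : 𝕂) • τ (x₀ ^ k)) 1).mpr
      (((expSeries_summable' (𝕂 := 𝕂) x₀).mapL τ).congr fun k => map_smul τ _ _)
  have hx₀ : x₀ ∈ Metric.ball x₀ 1 := Metric.mem_ball_self one_pos
  have hseries := hasFDerivAt_tsum_of_isPreconnected
    ((Real.summable_pow_div_factorial (‖x₀‖ + 1)).mul_left ‖τ‖) Metric.isOpen_ball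
    -- balls are preconnected, seen through the underlying real normed space
    (by let := NormedSpace.restrictScalars ℝ 𝕂 𝔸; exact Metric.isPreconnected_ball)
    hderiv hbound hx₀ hsummable hx₀
  rw [trace_comp_mul_exp_eq_tsum]
  exact (hseries.const_add (τ 1)).congr_of_eventuallyEq
    (Filter.Eventually.of_forall fun x => trace_exp_eq_tsum τ x)

end TraceExp

-- Any norm inducing the entrywise topology would do; the statement does not depend on it.
attribute [local instance] Matrix.linftyOpNormedRing Matrix.linftyOpNormedAlgebra

theorem hasDerivAt_trace_exp_general
    (n : ℕ) (A B : Matrix (Fin n) (Fin n) ℂ) (t₀ : ℝ) :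
    HasDerivAt (fun t : ℝ => (NormedSpace.exp (A + (t : ℂ) • B)).trace)
      ((B * NormedSpace.exp (A + (t₀ : ℂ) • B)).trace) t₀ := by
  let τ : Matrix (Fin n) (Fin n) ℂ →L[ℂ] ℂ :=
    LinearMap.toContinuousLinearMap (Matrix.traceLinearMap (Fin n) ℂ ℂ)
  have hpath := ((hasDerivAt_id t₀).ofReal_comp.smul_const B).const_add A
  have h := ((hasFDerivAt_trace_apply_exp τ Matrix.trace_mul_comm
    (A + (t₀ : ℂ) • B)).restrictScalars ℝ).comp_hasDerivAt t₀ hpath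
  refine h.congr_deriv ?_
  rw [Complex.ofReal_one, one_smul]
  exact Matrix.trace_mul_comm (NormedSpace.exp (A + (t₀ : ℂ) • B)) B

/-- For `n × n` complex matrices `A`, `B`, the function `t ↦ Tr exp (A + t • B)` is
differentiable at every `t₀ : ℝ` with derivative `Tr (B * exp (A + t₀ • B))`. -/
theorem hasDerivAt_trace_exp
    (n : ℕ) (hn : 1 ≤ n) (A B : Matrix (Fin n) (Fin n) ℂ) (t₀ : ℝ) :
    HasDerivAt (fun t : ℝ => (NormedSpace.exp (A + (t : ℂ) • B)).trace)
      ((B * NormedSpace.exp (A + (t₀ : ℂ) • B)).trace) t₀ :=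
  hasDerivAt_trace_exp_general n A B t₀
end

section
/- Let n ≥ 1, let H, A, B be Hermitian n×n complex matrices, let t₀ ≥ 0 be real, and suppose there is a unitary n×n complex matrix U such that U A U* = B and U (H + t₀•(A − B)) U* = H + t₀•(A − B). Then the real part of Tr(B · exp(−H)) is less than or equal to the real part of Tr(A · exp(−H)). -/
/-!
Put `K = H + t₀ • (A - B)`. Conjugation by `U` fixes `K`, hence `exp (-K)`, and carries `A` to `B`,
so `Tr ((A - B) * exp (-K)) = 0`. The exponential is monotone in the trace sense:
`Re Tr ((X - Y) * (exp X - exp Y)) ≥ 0` for Hermitian `X`, `Y`, because in eigenbases `(uᵢ)`, `(vⱼ)`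
of `X` and `Y` this trace is `∑ᵢⱼ |⟪uᵢ, vⱼ⟫|² (xᵢ - yⱼ) (exp xᵢ - exp yⱼ)`. Taking `X = -H`,
`Y = -K` gives `t₀ * Re Tr ((A - B) * exp (-H)) ≥ 0`.
-/

open Matrix

namespace Matrix

variable {ι : Type*} [Fintype ι] [DecidableEq ι]

section FunctionalCalculus

variable {𝕜 : Type*} [RCLike 𝕜]

theorem IsHermitian.exp_eq_cfc {X : Matrix ι ι 𝕜} (hX : X.IsHermitian) :
    NormedSpace.exp X = cfc Real.exp X :=
  -- matrices carry no global norm; any normed algebra structure inducing their topology will do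
  (@CFC.real_exp_eq_normedSpace_exp _ Matrix.linftyOpNormedRing _ Matrix.linftyOpNormedAlgebra
    IsHermitian.instContinuousFunctionalCalculus X hX.isSelfAdjoint).symm

theorem IsHermitian.star_eigenvectorUnitary_mul_cfc {X : Matrix ι ι 𝕜} (hX : X.IsHermitian)
    (f : ℝ → ℝ) :
    star (hX.eigenvectorUnitary : Matrix ι ι 𝕜) * cfc f X =
      diagonal (RCLike.ofReal ∘ f ∘ hX.eigenvalues) *
        star (hX.eigenvectorUnitary : Matrix ι ι 𝕜) := by
  rw [hX.cfc_eq, IsHermitian.cfc, Unitary.conjStarAlgAut_apply, ← mul_assoc, ← mul_assoc,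
    Unitary.coe_star_mul_self, one_mul]

theorem IsHermitian.cfc_mul_eigenvectorUnitary {X : Matrix ι ι 𝕜} (hX : X.IsHermitian)
    (f : ℝ → ℝ) :
    cfc f X * (hX.eigenvectorUnitary : Matrix ι ι 𝕜) =
      (hX.eigenvectorUnitary : Matrix ι ι 𝕜) * diagonal (RCLike.ofReal ∘ f ∘ hX.eigenvalues) := by
  rw [hX.cfc_eq, IsHermitian.cfc, Unitary.conjStarAlgAut_apply, mul_assoc,
    Unitary.coe_star_mul_self, mul_one]

omit [DecidableEq ι] in
theorem trace_mul_star_eq_sum (Z W : Matrix ι ι 𝕜) :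
    (Z * star W).trace = ∑ i, ∑ j, Z i j * star (W i j) := by
  simp only [trace, diag, mul_apply, star_apply]

theorem trace_unitary_conj_mul_star {P Q : Matrix ι ι 𝕜} (hP : P ∈ unitaryGroup ι 𝕜)
    (hQ : Q ∈ unitaryGroup ι 𝕜) (Z W : Matrix ι ι 𝕜) :
    ((star P * Z * Q) * star (star P * W * Q)).trace = (Z * star W).trace := by
  have hP' : P * star P = 1 := mem_unitaryGroup_iff.mp hP
  have hQ' : Q * star Q = 1 := mem_unitaryGroup_iff.mp hQ
  rw [star_mul, star_mul, star_star, ← mul_assoc (star Q)]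
  calc ((star P * Z * Q) * (star Q * star W * P)).trace
      = ((star P * (Z * (Q * star Q) * star W)) * P).trace := by simp only [mul_assoc]
    _ = (P * star P * (Z * (Q * star Q) * star W)).trace := by rw [trace_mul_comm, ← mul_assoc]
    _ = (Z * star W).trace := by rw [hP', hQ', mul_one, one_mul]

variable {X Y : Matrix ι ι 𝕜}

theorem IsHermitian.star_eigenvectorUnitary_mul_cfc_sub_mul_eigenvectorUnitary_apply
    (hX : X.IsHermitian) (hY : Y.IsHermitian) (f : ℝ → ℝ) (i j : ι) :
    (star (hX.eigenvectorUnitary : Matrix ι ι 𝕜) * (cfc f X - cfc f Y) *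
        (hY.eigenvectorUnitary : Matrix ι ι 𝕜)) i j
      = (f (hX.eigenvalues i) - f (hY.eigenvalues j) : ℝ) *
          (star (hX.eigenvectorUnitary : Matrix ι ι 𝕜) * hY.eigenvectorUnitary) i j := by
  rw [mul_sub, sub_mul, hX.star_eigenvectorUnitary_mul_cfc, mul_assoc _ (cfc f Y),
    hY.cfc_mul_eigenvectorUnitary, mul_assoc, ← mul_assoc _ _ (diagonal _), sub_apply,
    diagonal_mul, mul_diagonal]
  simp only [Function.comp_apply, RCLike.ofReal_sub]
  ring

theorem IsHermitian.trace_cfc_sub_mul_cfc_sub (hX : X.IsHermitian) (hY : Y.IsHermitian)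
    (f g : ℝ → ℝ) :
    ((cfc f X - cfc f Y) * (cfc g X - cfc g Y)).trace =
      ∑ i, ∑ j, (((f (hX.eigenvalues i) - f (hY.eigenvalues j)) *
        (g (hX.eigenvalues i) - g (hY.eigenvalues j)) *
          ‖(star (hX.eigenvectorUnitary : Matrix ι ι 𝕜) * hY.eigenvectorUnitary) i j‖ ^ 2 : ℝ)
            : 𝕜) := by
  have hW : star (cfc g X - cfc g Y) = cfc g X - cfc g Y :=
    (IsSelfAdjoint.sub (cfc_predicate g X) (cfc_predicate g Y)).star_eq
  rw [← hW, ← trace_unitary_conj_mul_star hX.eigenvectorUnitary.2 hY.eigenvectorUnitary.2,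
    trace_mul_star_eq_sum]
  refine Finset.sum_congr rfl fun i _ => Finset.sum_congr rfl fun j _ => ?_
  rw [hX.star_eigenvectorUnitary_mul_cfc_sub_mul_eigenvectorUnitary_apply hY,
    hX.star_eigenvectorUnitary_mul_cfc_sub_mul_eigenvectorUnitary_apply hY, star_mul',
    RCLike.star_def, RCLike.conj_ofReal]
  push_cast
  linear_combination ((f (hX.eigenvalues i) - f (hY.eigenvalues j)) *
    (g (hX.eigenvalues i) - g (hY.eigenvalues j)) : 𝕜) * RCLike.mul_conj
      ((star (hX.eigenvectorUnitary : Matrix ι ι 𝕜) * hY.eigenvectorUnitary) i j)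

theorem IsHermitian.re_trace_cfc_sub_mul_cfc_sub_nonneg (hX : X.IsHermitian)
    (hY : Y.IsHermitian) {f g : ℝ → ℝ} (hfg : Monovary f g) :
    0 ≤ RCLike.re ((cfc f X - cfc f Y) * (cfc g X - cfc g Y)).trace := by
  simp only [hX.trace_cfc_sub_mul_cfc_sub hY, ← RCLike.ofReal_sum, RCLike.ofReal_re]
  refine Finset.sum_nonneg fun i _ => Finset.sum_nonneg fun j _ => mul_nonneg ?_ (sq_nonneg _)
  simpa only [neg_sub, neg_mul_neg] using
    hfg.sub_mul_sub_nonneg (hY.eigenvalues j) (hX.eigenvalues i)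

theorem IsHermitian.re_trace_sub_mul_exp_sub_nonneg (hX : X.IsHermitian) (hY : Y.IsHermitian) :
    0 ≤ RCLike.re ((X - Y) * (NormedSpace.exp X - NormedSpace.exp Y)).trace := by
  have h := hX.re_trace_cfc_sub_mul_cfc_sub_nonneg hY (monotone_id.monovary Real.exp_monotone)
  rwa [cfc_id ℝ X, cfc_id ℝ Y, ← hX.exp_eq_cfc, ← hY.exp_eq_cfc] at h

end FunctionalCalculus

theorem commute_of_mul_mul_conjTranspose_eq {R : Type*} [Semiring R] [Star R] {U K : Matrix ι ι R}
    (hU : Uᴴ * U = 1) (hK : U * K * Uᴴ = K) : Commute U K := by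
  calc U * K = U * K * (Uᴴ * U) := by rw [hU, mul_one]
    _ = K * U := by rw [← mul_assoc, hK]

theorem trace_conj_mul_of_commute {R : Type*} [CommSemiring R] [Star R] {U X : Matrix ι ι R}
    (hU : Uᴴ * U = 1) (hUX : Commute U X) (A : Matrix ι ι R) :
    (U * A * Uᴴ * X).trace = (A * X).trace := by
  calc (U * A * Uᴴ * X).trace = (A * Uᴴ * X * U).trace := by
        rw [mul_assoc, mul_assoc, trace_mul_comm]; simp only [mul_assoc]
    _ = (A * X).trace := by rw [mul_assoc, ← hUX.eq, ← mul_assoc, mul_assoc A, hU, mul_one]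

end Matrix

theorem re_trace_mul_exp_neg_le_of_symmetry_general
    (n : ℕ) (H A B : Matrix (Fin n) (Fin n) ℂ)
    (hH : H.IsHermitian) (hA : A.IsHermitian) (hB : B.IsHermitian)
    (t₀ : ℝ) (ht₀ : 0 ≤ t₀)
    (hU : ∃ U : Matrix (Fin n) (Fin n) ℂ, U * Uᴴ = 1 ∧ Uᴴ * U = 1 ∧
      U * A * Uᴴ = B ∧
      U * (H + (t₀ : ℂ) • (A - B)) * Uᴴ = H + (t₀ : ℂ) • (A - B)) :
    ((B * NormedSpace.exp (-H)).trace).re ≤ ((A * NormedSpace.exp (-H)).trace).re := by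
  obtain ⟨U, -, hUU, hUAB, hUK⟩ := hU
  set K := H + (t₀ : ℂ) • (A - B) with hK_def
  have hK : K.IsHermitian := hH.add ((hA.sub hB).smul (Complex.conj_ofReal t₀))
  have hcomm : Commute U (NormedSpace.exp (-K)) :=
    (commute_of_mul_mul_conjTranspose_eq hUU hUK).neg_right.exp_right
  have htrace : ((A - B) * NormedSpace.exp (-K)).trace = 0 := by
    rw [sub_mul, trace_sub, ← hUAB, trace_conj_mul_of_commute hUU hcomm, sub_self]
  have hshift : -H - -K = (t₀ : ℂ) • (A - B) := by rw [hK_def]; abel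
  have hmono : 0 ≤ t₀ * ((A - B) * NormedSpace.exp (-H)).trace.re := by
    have h := hH.neg.re_trace_sub_mul_exp_sub_nonneg hK.neg
    rwa [hshift, smul_mul, trace_smul, mul_sub, trace_sub, htrace, sub_zero, smul_eq_mul,
      RCLike.re_to_complex, Complex.re_ofReal_mul] at h
  have hnonneg : 0 ≤ ((A - B) * NormedSpace.exp (-H)).trace.re := by
    rcases ht₀.eq_or_lt with rfl | hpos
    · simp only [hK_def, Complex.ofReal_zero, zero_smul, add_zero] at htrace
      rw [htrace, Complex.zero_re]
    · exact (mul_nonneg_iff_of_pos_left hpos).mp hmono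
  rwa [sub_mul, trace_sub, Complex.sub_re, sub_nonneg] at hnonneg

/-- Finite-dimensional skeleton of the occupation-number monotonicity lemma: if `H`, `A`, `B`
are Hermitian, `t₀ ≥ 0`, and there is a unitary `U` with `U A U* = B` which leaves
`H + t₀ • (A - B)` invariant, then `Re Tr (B * exp (-H)) ≤ Re Tr (A * exp (-H))`. -/
theorem re_trace_mul_exp_neg_le_of_symmetry
    (n : ℕ) (hn : 1 ≤ n) (H A B : Matrix (Fin n) (Fin n) ℂ)
    (hH : H.IsHermitian) (hA : A.IsHermitian) (hB : B.IsHermitian)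
    (t₀ : ℝ) (ht₀ : 0 ≤ t₀)
    (hU : ∃ U : Matrix (Fin n) (Fin n) ℂ, U * Uᴴ = 1 ∧ Uᴴ * U = 1 ∧
      U * A * Uᴴ = B ∧
      U * (H + (t₀ : ℂ) • (A - B)) * Uᴴ = H + (t₀ : ℂ) • (A - B)) :
    ((B * NormedSpace.exp (-H)).trace).re ≤ ((A * NormedSpace.exp (-H)).trace).re :=
  re_trace_mul_exp_neg_le_of_symmetry_general n H A B hH hA hB t₀ ht₀ hU
end

section
/- Let 𝓗 be a complex inner product space, let (φ_i)_{i∈ℕ} be an orthonormal family in 𝓗, let ψ ∈ 𝓗 with ‖ψ‖ = 1, let ρ̄ ≥ 0 and let ρ : ℕ → ℝ be a non-increasing nonnegative summable sequence with ∑_{i=0}^∞ ρ_i ≤ ρ̄. Then for every i₀ ∈ ℕ, ∑_{i=0}^∞ |⟨φ_i, ψ⟩|² ρ_i ≤ ρ̄ · ∑_{i < i₀} |⟨φ_i, ψ⟩|² + ρ_{i₀}. -/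
open scoped InnerProductSpace

/-- Splitting estimate: for an orthonormal family `φ`, a unit vector `ψ` and a
non-increasing nonnegative summable sequence `ρ` with total sum at most `ρ̄`,
`∑' i, |⟨φ i, ψ⟩|² ρ i ≤ ρ̄ * ∑_{i < i₀} |⟨φ i, ψ⟩|² + ρ i₀`. -/
theorem tsum_inner_sq_mul_occupation_le
    {𝓗 : Type*} [NormedAddCommGroup 𝓗] [InnerProductSpace ℂ 𝓗]
    (φ : ℕ → 𝓗) (hφ : Orthonormal ℂ φ)
    (ψ : 𝓗) (hψ : ‖ψ‖ = 1)
    (ρBar : ℝ) (hρBar : 0 ≤ ρBar) (ρ : ℕ → ℝ)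
    (hmono : Antitone ρ) (hnonneg : ∀ i, 0 ≤ ρ i)
    (hsumm : Summable ρ) (hsum : ∑' i, ρ i ≤ ρBar) (i₀ : ℕ) :
    ∑' i : ℕ, ‖⟪φ i, ψ⟫_ℂ‖ ^ 2 * ρ i ≤
      ρBar * ∑ i ∈ Finset.range i₀, ‖⟪φ i, ψ⟫_ℂ‖ ^ 2 + ρ i₀ := by
  set c : ℕ → ℝ := fun i => ‖⟪φ i, ψ⟫_ℂ‖ ^ 2 with hc
  have hcnn : ∀ i, 0 ≤ c i := fun i => by positivity
  have hcsum : Summable c := hφ.inner_products_summable ψ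
  have hρle : ∀ i, ρ i ≤ ρBar := fun i =>
    le_trans (Summable.le_tsum hsumm i fun j _ => hnonneg j) hsum
  have hfnn : ∀ i, 0 ≤ c i * ρ i := fun i => mul_nonneg (hcnn i) (hnonneg i)
  have hfsum : Summable fun i => c i * ρ i :=
    (hcsum.mul_right ρBar).of_nonneg_of_le hfnn
      (fun i => mul_le_mul_of_nonneg_left (hρle i) (hcnn i))
  -- split
  have hsplit := (Summable.sum_add_tsum_nat_add (f := fun i => c i * ρ i) i₀ hfsum).symm
  rw [hsplit]
  have h1 : ∑ i ∈ Finset.range i₀, c i * ρ i ≤ ρBar * ∑ i ∈ Finset.range i₀, c i := by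
    rw [Finset.mul_sum]
    refine Finset.sum_le_sum fun i _ => ?_
    rw [mul_comm]
    exact mul_le_mul_of_nonneg_right (hρle i) (hcnn i)
  have htailsum : Summable fun i => c (i + i₀) * ρ (i + i₀) :=
    hfsum.comp_injective (add_left_injective i₀)
  have hctail : Summable fun i => c (i + i₀) :=
    hcsum.comp_injective (add_left_injective i₀)
  have hcbessel : ∑' i, c (i + i₀) ≤ 1 := by
    have h := hφ.tsum_inner_products_le ψ
    rw [hψ] at h
    calc ∑' i, c (i + i₀) ≤ ∑' i, c i := by
          rw [← Summable.sum_add_tsum_nat_add (f := c) i₀ hcsum]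
          exact le_add_of_nonneg_left (Finset.sum_nonneg fun i _ => hcnn i)
      _ ≤ 1 := by simpa using h
  have h2 : ∑' i, c (i + i₀) * ρ (i + i₀) ≤ ρ i₀ := by
    calc ∑' i, c (i + i₀) * ρ (i + i₀)
        ≤ ∑' i, c (i + i₀) * ρ i₀ := by
          refine Summable.tsum_le_tsum (fun i => ?_) htailsum (hctail.mul_right _)
          exact mul_le_mul_of_nonneg_left (hmono (Nat.le_add_left i₀ i)) (hcnn _)
      _ = (∑' i, c (i + i₀)) * ρ i₀ := by rw [tsum_mul_right]
      _ ≤ 1 * ρ i₀ := mul_le_mul_of_nonneg_right hcbessel (hnonneg i₀)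
      _ = ρ i₀ := one_mul _
  exact add_le_add h1 h2
end

section
/- Let ρ̄ ≥ 0. For each l ∈ ℕ let ρ^l : ℕ → ℝ be a non-increasing, nonnegative summable sequence with ∑_{i=0}^∞ ρ^l_i ≤ ρ̄, and let c^l : ℕ → ℂ satisfy ∑_{i=0}^∞ |c^l_i|² ≤ 1. Assume that for each fixed i ∈ ℕ, |c^l_i| → 0 as l → ∞. Then ∑_{i=0}^∞ |c^l_i|² ρ^l_i → 0 as l → ∞. -/
/-!
An antitone nonnegative sequence with total mass at most `ρ̄` satisfies `ρᵢ ≤ ρ̄ / (i + 1)`, so the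
occupations are dominated by a fixed sequence tending to zero. Given `ε`, the weights beyond some
index `N` are then below `ε`, so the tail contributes at most `ε` by Bessel's inequality, while the
finitely many overlaps `cᵢ` with `i < N` vanish in the limit.
-/

open Filter Topology Finset

theorem Antitone.le_tsum_div_add_one {f : ℕ → ℝ} (hf : Antitone f) (hf0 : ∀ i, 0 ≤ f i)
    (hfs : Summable f) (i : ℕ) : f i ≤ (∑' j, f j) / (i + 1) := by
  rw [le_div_iff₀ (by positivity), mul_comm]
  calc ((i : ℝ) + 1) * f i = #(range (i + 1)) • f i := by simp
    _ ≤ ∑ j ∈ range (i + 1), f j :=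
      card_nsmul_le_sum _ _ _ fun j hj => hf (Nat.le_of_lt_succ (mem_range.mp hj))
    _ ≤ ∑' j, f j := hfs.sum_le_tsum _ fun j _ => hf0 j

theorem tsum_mul_le_of_le {a b : ℕ → ℝ} (N : ℕ) {B β : ℝ} (ha0 : ∀ i, 0 ≤ a i)
    (has : Summable a) (hb0 : ∀ i, 0 ≤ b i) (hbB : ∀ i, b i ≤ B)
    (hbβ : ∀ i, N ≤ i → b i ≤ β) (hβ : 0 ≤ β) :
    ∑' i, a i * b i ≤ B * ∑ i ∈ range N, a i + β * ∑' i, a i := by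
  have hab : Summable fun i => a i * b i :=
    (has.mul_left B).of_nonneg_of_le (fun i => mul_nonneg (ha0 i) (hb0 i))
      fun i => by rw [mul_comm B]; exact mul_le_mul_of_nonneg_left (hbB i) (ha0 i)
  have hpoint : ∀ i, a i * b i ≤ (range N : Set ℕ).indicator (fun i => B * a i) i + β * a i := by
    intro i
    by_cases hi : i < N
    · rw [Set.indicator_of_mem (by simpa using hi)]
      nlinarith [ha0 i, hbB i]
    · rw [Set.indicator_of_notMem (by simpa using hi), zero_add, mul_comm β]
      exact mul_le_mul_of_nonneg_left (hbβ i (not_lt.mp hi)) (ha0 i)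
  calc ∑' i, a i * b i
      ≤ ∑' i, ((range N : Set ℕ).indicator (fun i => B * a i) i + β * a i) :=
        hab.tsum_le_tsum hpoint (((has.mul_left B).indicator _).add (has.mul_left β))
    _ = B * ∑ i ∈ range N, a i + β * ∑' i, a i := by
        rw [((has.mul_left B).indicator _).tsum_add (has.mul_left β), ← sum_eq_tsum_indicator,
          mul_sum, tsum_mul_left]

theorem tendsto_tsum_mul_of_tendsto_zero {α : Type*} {F : Filter α} {a b : α → ℕ → ℝ}
    {g : ℕ → ℝ} {C : ℝ} (ha0 : ∀ l i, 0 ≤ a l i) (has : ∀ l, Summable (a l))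
    (haC : ∀ l, ∑' i, a l i ≤ C) (ha : ∀ i, Tendsto (a · i) F (𝓝 0))
    (hb0 : ∀ l i, 0 ≤ b l i) (hbg : ∀ l i, b l i ≤ g i) (hg : Tendsto g atTop (𝓝 0)) :
    Tendsto (fun l => ∑' i, a l i * b l i) F (𝓝 0) := by
  refine tendsto_order.2 ⟨fun ε hε => Eventually.of_forall fun l =>
    hε.trans_le (tsum_nonneg fun i => mul_nonneg (ha0 l i) (hb0 l i)), fun ε hε => ?_⟩
  obtain ⟨B, hB⟩ := hg.bddAbove_range
  set β := ε / (2 * (|C| + 1)) with hβ_def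
  have hβ : 0 < β := by positivity
  have hβC : β * C < ε / 2 := by
    have : β * (|C| + 1) = ε / 2 := by rw [hβ_def]; field_simp
    nlinarith [le_abs_self C]
  obtain ⟨N, hN⟩ := eventually_atTop.1 (hg.eventually (ge_mem_nhds hβ))
  have hhead : Tendsto (fun l => B * ∑ i ∈ range N, a l i) F (𝓝 0) := by
    simpa using (tendsto_finsetSum _ fun i _ => ha i).const_mul B
  filter_upwards [hhead.eventually (gt_mem_nhds (half_pos hε))] with l hl
  calc ∑' i, a l i * b l i
      ≤ B * ∑ i ∈ range N, a l i + β * ∑' i, a l i :=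
        tsum_mul_le_of_le N (ha0 l) (has l) (hb0 l) (fun i => (hbg l i).trans (hB ⟨i, rfl⟩))
          (fun i hi => (hbg l i).trans (hN i hi)) hβ.le
    _ ≤ B * ∑ i ∈ range N, a l i + β * C := by gcongr; exact haC l
    _ < ε := by linarith

theorem tendsto_tsum_overlap_sq_mul_occupation_general
    (ρBar : ℝ)
    (ρ : ℕ → ℕ → ℝ) (c : ℕ → ℕ → ℂ)
    (hmono : ∀ l, Antitone (ρ l)) (hnonneg : ∀ l i, 0 ≤ ρ l i)
    (hsumm : ∀ l, Summable (ρ l)) (hsum : ∀ l, ∑' i, ρ l i ≤ ρBar)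
    (hcsumm : ∀ l, Summable fun i => ‖c l i‖ ^ 2)
    (hbessel : ∀ l, ∑' i, ‖c l i‖ ^ 2 ≤ 1)
    (hconv : ∀ i, Tendsto (fun l => ‖c l i‖) atTop (nhds 0)) :
    Tendsto (fun l => ∑' i, ‖c l i‖ ^ 2 * ρ l i) atTop (nhds 0) := by
  have hoccupation : ∀ l i, ρ l i ≤ ρBar / (i + 1) := fun l i =>
    ((hmono l).le_tsum_div_add_one (hnonneg l) (hsumm l) i).trans (by gcongr; exact hsum l)
  have hdecay : Tendsto (fun i : ℕ => ρBar / (i + 1)) atTop (𝓝 0) := by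
    simpa only [mul_one_div, mul_zero] using tendsto_one_div_add_atTop_nhds_zero_nat.const_mul ρBar
  refine tendsto_tsum_mul_of_tendsto_zero (fun l i => by positivity) hcsumm hbessel
    (fun i => ?_) hnonneg hoccupation hdecay
  simpa using (hconv i).pow 2

/-- Abstract core of the type-III theorem: if for each `l` the occupation densities
`ρ l` are non-increasing, nonnegative, summable with total at most `ρ̄`, the overlaps
`c l` satisfy Bessel's inequality `∑' i, ‖c l i‖² ≤ 1`, and each fixed overlap
`‖c l i‖` tends to `0` as `l → ∞`, then `∑' i, ‖c l i‖² * ρ l i → 0`. -/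
theorem tendsto_tsum_overlap_sq_mul_occupation
    (ρBar : ℝ) (hρBar : 0 ≤ ρBar)
    (ρ : ℕ → ℕ → ℝ) (c : ℕ → ℕ → ℂ)
    (hmono : ∀ l, Antitone (ρ l)) (hnonneg : ∀ l i, 0 ≤ ρ l i)
    (hsumm : ∀ l, Summable (ρ l)) (hsum : ∀ l, ∑' i, ρ l i ≤ ρBar)
    (hcsumm : ∀ l, Summable fun i => ‖c l i‖ ^ 2)
    (hbessel : ∀ l, ∑' i, ‖c l i‖ ^ 2 ≤ 1)
    (hconv : ∀ i, Tendsto (fun l => ‖c l i‖) atTop (nhds 0)) :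
    Tendsto (fun l => ∑' i, ‖c l i‖ ^ 2 * ρ l i) atTop (nhds 0) :=
  tendsto_tsum_overlap_sq_mul_occupation_general ρBar ρ c hmono hnonneg hsumm hsum hcsumm hbessel
    hconv
end

section
/- Fix d ≥ 1 and ρ̄ ≥ 0. For each integer l ≥ 1 let (φ^l_i)_{i∈ℕ} be an orthonormal family in L²(ℝ^d, ℂ) with each φ^l_i also in L¹(ℝ^d), let ψ^l ∈ L²(ℝ^d, ℂ) with ‖ψ^l‖_{L²} = 1 and with essential supremum bound ‖ψ^l‖_{L^∞} ≤ l^{-d/2}, and let ρ^l : ℕ → ℝ be non-increasing, nonnegative and summable with ∑_{i=0}^∞ ρ^l_i ≤ ρ̄. Assume the localization condition: for every fixed i, l^{-d/2} ‖φ^l_i‖_{L¹} → 0 as l → ∞. Then ∑_{i=0}^∞ |⟨φ^l_i, ψ^l⟩_{L²}|² ρ^l_i → 0 as l → ∞. -/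
open Filter MeasureTheory
open scoped InnerProductSpace Topology

/-!
Since `‖ψ^l‖_∞ ≤ l^{-d/2}`, each overlap satisfies `|⟨φ^l_i, ψ^l⟩| ≤ l^{-d/2} ‖φ^l_i‖_{L¹}`, so by
localization every fixed term of the series tends to zero. The tail is controlled uniformly in `l`:
a non-increasing sequence with sum at most `ρ̄` satisfies `ρ^l_N ≤ ρ̄ / (N + 1)`, and by Bessel's
inequality the overlaps `|⟨φ^l_i, ψ^l⟩|²` sum to at most `‖ψ^l‖² = 1`, so the terms with `i ≥ N`
contribute at most `ρ̄ / (N + 1)`.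
-/

theorem norm_inner_le_mul_integral_norm {α : Type*} [MeasurableSpace α] {μ : Measure α}
    {𝕜 E : Type*} [RCLike 𝕜] [NormedAddCommGroup E] [InnerProductSpace 𝕜 E]
    (f g : Lp E 2 μ) (hf : Integrable f μ) {C : ℝ} (hg : ∀ᵐ x ∂μ, ‖g x‖ ≤ C) :
    ‖⟪f, g⟫_𝕜‖ ≤ C * ∫ x, ‖f x‖ ∂μ := by
  rw [L2.inner_def, ← integral_const_mul]
  refine (norm_integral_le_integral_norm _).trans <|
    integral_mono_of_nonneg (.of_forall fun _ => norm_nonneg _) (hf.norm.const_mul C) ?_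
  filter_upwards [hg] with x hx
  calc ‖⟪f x, g x⟫_𝕜‖ ≤ ‖f x‖ * ‖g x‖ := norm_inner_le_norm _ _
    _ ≤ C * ‖f x‖ := by rw [mul_comm]; exact mul_le_mul_of_nonneg_right hx (norm_nonneg _)

theorem Antitone.mul_le_tsum {f : ℕ → ℝ} (hmono : Antitone f) (hf : ∀ i, 0 ≤ f i)
    (hsumm : Summable f) (n : ℕ) : ((n : ℝ) + 1) * f n ≤ ∑' i, f i :=
  calc ((n : ℝ) + 1) * f n = ∑ _ ∈ Finset.range (n + 1), f n := by simp
    _ ≤ ∑ i ∈ Finset.range (n + 1), f i :=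
        Finset.sum_le_sum fun i hi => hmono (Nat.lt_succ_iff.mp (Finset.mem_range.mp hi))
    _ ≤ ∑' i, f i := hsumm.sum_le_tsum _ fun i _ => hf i

theorem tsum_mul_antitone_le {a ρ : ℕ → ℝ} (ha : ∀ i, 0 ≤ a i) (hasumm : Summable a)
    (hρ : ∀ i, 0 ≤ ρ i) (hmono : Antitone ρ) (N : ℕ) :
    ∑' i, a i * ρ i ≤ ∑ i ∈ Finset.range N, a i * ρ i + (∑' i, a i) * ρ N := by
  have hsumm : Summable fun i => a i * ρ i :=
    (hasumm.mul_right (ρ 0)).of_nonneg_of_le (fun i => mul_nonneg (ha i) (hρ i))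
      fun i => mul_le_mul_of_nonneg_left (hmono (Nat.zero_le i)) (ha i)
  have hasumm' : Summable fun i => a (i + N) := (summable_nat_add_iff N).mpr hasumm
  rw [← hsumm.sum_add_tsum_nat_add N]
  gcongr
  calc ∑' i, a (i + N) * ρ (i + N) ≤ ∑' i, a (i + N) * ρ N :=
        ((summable_nat_add_iff N).mpr hsumm).tsum_le_tsum
          (fun i => mul_le_mul_of_nonneg_left (hmono (Nat.le_add_left N i)) (ha _))
          (hasumm'.mul_right _)
    _ = (∑' i, a (i + N)) * ρ N := tsum_mul_right
    _ ≤ (∑' i, a i) * ρ N :=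
        mul_le_mul_of_nonneg_right (hasumm'.tsum_le_tsum_of_inj (· + N) (add_left_injective N)
          (fun i _ => ha i) (fun _ => le_rfl) hasumm) (hρ N)

theorem tendsto_tsum_mul_antitone_nhds_zero {ι : Type*} {F : Filter ι} {a ρ : ι → ℕ → ℝ}
    {B ρBar : ℝ} (ha : ∀ᶠ l in F, ∀ i, 0 ≤ a l i) (hasumm : ∀ᶠ l in F, Summable (a l))
    (haB : ∀ᶠ l in F, ∑' i, a l i ≤ B) (hlim : ∀ i, Tendsto (fun l => a l i) F (𝓝 0))
    (hρ : ∀ᶠ l in F, ∀ i, 0 ≤ ρ l i) (hmono : ∀ᶠ l in F, Antitone (ρ l))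
    (hρsumm : ∀ᶠ l in F, Summable (ρ l)) (hρBar : ∀ᶠ l in F, ∑' i, ρ l i ≤ ρBar) :
    Tendsto (fun l => ∑' i, a l i * ρ l i) F (𝓝 0) := by
  have hρle : ∀ᶠ l in F, ∀ i, ρ l i ≤ ρBar / ((i : ℝ) + 1) := by
    filter_upwards [hρ, hmono, hρsumm, hρBar] with l h0 hm hs hb i
    rw [le_div_iff₀ (by positivity), mul_comm]
    exact (hm.mul_le_tsum h0 hs i).trans hb
  have hhead (N : ℕ) : Tendsto (fun l => ∑ i ∈ Finset.range N, a l i * ρ l i) F (𝓝 0) := by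
    rw [← Finset.sum_const_zero (s := Finset.range N)]
    refine tendsto_finsetSum _ fun i _ => ?_
    refine squeeze_zero' ?_ ?_ (by simpa using (hlim i).mul_const (ρBar / ((i : ℝ) + 1)))
    · filter_upwards [ha, hρ] with l ha hρ using mul_nonneg (ha i) (hρ i)
    · filter_upwards [ha, hρle] with l ha hρle using mul_le_mul_of_nonneg_left (hρle i) (ha i)
  rw [Metric.tendsto_nhds]
  intro ε hε
  have htail : Tendsto (fun N : ℕ => B * (ρBar / ((N : ℝ) + 1))) atTop (𝓝 0) := by
    simpa [div_eq_mul_inv] using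
      (tendsto_one_div_add_atTop_nhds_zero_nat (𝕜 := ℝ)).const_mul ρBar |>.const_mul B
  obtain ⟨N, hN⟩ := (htail.eventually (gt_mem_nhds (half_pos hε))).exists
  filter_upwards [(hhead N).eventually (gt_mem_nhds (half_pos hε)), ha, hasumm, haB, hρ, hmono,
    hρle] with l hhead ha hasumm haB hρ hmono hρle
  have hB : 0 ≤ B := (tsum_nonneg ha).trans haB
  have hsplit : ∑' i, a l i * ρ l i ≤
      ∑ i ∈ Finset.range N, a l i * ρ l i + B * (ρBar / ((N : ℝ) + 1)) :=
    (tsum_mul_antitone_le ha hasumm hρ hmono N).trans <|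
      add_le_add_right (mul_le_mul haB (hρle N) (hρ N) hB) _
  rw [Real.dist_eq, sub_zero, abs_of_nonneg (tsum_nonneg fun i => mul_nonneg (ha i) (hρ i))]
  linarith

theorem tendsto_kinetic_occupation_of_localization_general
    (d : ℕ) (ρBar : ℝ)
    (φ : ℕ → ℕ → Lp ℂ 2 (volume : Measure (EuclideanSpace ℝ (Fin d))))
    (ψ : ℕ → Lp ℂ 2 (volume : Measure (EuclideanSpace ℝ (Fin d))))
    (ρ : ℕ → ℕ → ℝ)
    (hφorth : ∀ l, 1 ≤ l → Orthonormal ℂ (φ l))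
    (hφL1 : ∀ l, 1 ≤ l → ∀ i, MemLp (φ l i : EuclideanSpace ℝ (Fin d) → ℂ) 1 volume)
    (hψnorm : ∀ l, 1 ≤ l → ‖ψ l‖ = 1)
    (hψbound : ∀ l, 1 ≤ l →
      ∀ᵐ x : EuclideanSpace ℝ (Fin d), ‖(ψ l : EuclideanSpace ℝ (Fin d) → ℂ) x‖ ≤
        (l : ℝ) ^ (-(d : ℝ) / 2))
    (hmono : ∀ l, 1 ≤ l → Antitone (ρ l)) (hnonneg : ∀ l, 1 ≤ l → ∀ i, 0 ≤ ρ l i)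
    (hsumm : ∀ l, 1 ≤ l → Summable (ρ l)) (hsum : ∀ l, 1 ≤ l → ∑' i, ρ l i ≤ ρBar)
    (hloc : ∀ i, Tendsto
      (fun l : ℕ => (l : ℝ) ^ (-(d : ℝ) / 2) *
        ∫ x : EuclideanSpace ℝ (Fin d), ‖(φ l i : EuclideanSpace ℝ (Fin d) → ℂ) x‖)
      atTop (nhds 0)) :
    Tendsto (fun l : ℕ => ∑' i : ℕ, ‖⟪φ l i, ψ l⟫_ℂ‖ ^ 2 * ρ l i) atTop (nhds 0) := by
  have hbessel : ∀ l, 1 ≤ l → ∑' i, ‖⟪φ l i, ψ l⟫_ℂ‖ ^ 2 ≤ 1 := fun l hl => by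
    simpa [hψnorm l hl] using (hφorth l hl).tsum_inner_products_le (ψ l)
  have hoverlap (i : ℕ) : Tendsto (fun l => ‖⟪φ l i, ψ l⟫_ℂ‖) atTop (𝓝 0) := by
    refine squeeze_zero' (.of_forall fun _ => norm_nonneg _) ?_ (hloc i)
    filter_upwards [eventually_ge_atTop 1] with l hl
    exact norm_inner_le_mul_integral_norm _ _
      (memLp_one_iff_integrable.mp (hφL1 l hl i)) (hψbound l hl)
  have hge := eventually_ge_atTop (1 : ℕ)
  exact tendsto_tsum_mul_antitone_nhds_zero (.of_forall fun _ _ => by positivity)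
    (hge.mono fun l hl => (hφorth l hl).inner_products_summable (ψ l)) (hge.mono hbessel)
    (fun i => by simpa using (hoverlap i).pow 2)
    (hge.mono hnonneg) (hge.mono hmono) (hge.mono hsumm) (hge.mono hsum)

/-- Under the localization condition `l^{-d/2} ‖φ^l_i‖_{L¹} → 0`, the kinetic occupation
density `∑' i, |⟨φ^l_i, ψ^l⟩|² ρ^l_i` of a normalized kinetic state `ψ^l` with
`‖ψ^l‖_∞ ≤ l^{-d/2}` vanishes in the thermodynamic limit. -/
theorem tendsto_kinetic_occupation_of_localization
    (d : ℕ) (hd : 1 ≤ d) (ρBar : ℝ) (hρBar : 0 ≤ ρBar)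
    (φ : ℕ → ℕ → Lp ℂ 2 (volume : Measure (EuclideanSpace ℝ (Fin d))))
    (ψ : ℕ → Lp ℂ 2 (volume : Measure (EuclideanSpace ℝ (Fin d))))
    (ρ : ℕ → ℕ → ℝ)
    (hφorth : ∀ l, 1 ≤ l → Orthonormal ℂ (φ l))
    (hφL1 : ∀ l, 1 ≤ l → ∀ i, MemLp (φ l i : EuclideanSpace ℝ (Fin d) → ℂ) 1 volume)
    (hψnorm : ∀ l, 1 ≤ l → ‖ψ l‖ = 1)
    (hψbound : ∀ l, 1 ≤ l →
      ∀ᵐ x : EuclideanSpace ℝ (Fin d), ‖(ψ l : EuclideanSpace ℝ (Fin d) → ℂ) x‖ ≤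
        (l : ℝ) ^ (-(d : ℝ) / 2))
    (hmono : ∀ l, 1 ≤ l → Antitone (ρ l)) (hnonneg : ∀ l, 1 ≤ l → ∀ i, 0 ≤ ρ l i)
    (hsumm : ∀ l, 1 ≤ l → Summable (ρ l)) (hsum : ∀ l, 1 ≤ l → ∑' i, ρ l i ≤ ρBar)
    (hloc : ∀ i, Tendsto
      (fun l : ℕ => (l : ℝ) ^ (-(d : ℝ) / 2) *
        ∫ x : EuclideanSpace ℝ (Fin d), ‖(φ l i : EuclideanSpace ℝ (Fin d) → ℂ) x‖)
      atTop (nhds 0)) :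
    Tendsto (fun l : ℕ => ∑' i : ℕ, ‖⟪φ l i, ψ l⟫_ℂ‖ ^ 2 * ρ l i) atTop (nhds 0) :=
  tendsto_kinetic_occupation_of_localization_general d ρBar φ ψ ρ hφorth hφL1 hψnorm hψbound hmono
    hnonneg hsumm hsum hloc
end

section
/- Let d ≥ 1, let Q = [−1/2, 1/2]^d ⊂ ℝ^d be the closed unit cube, and let v : ℝ^d → ℝ be continuous on Q with v ≥ 0 on Q. Let y_1, …, y_n be finitely many distinct points in the open cube (−1/2, 1/2)^d such that v(x) = 0 for x ∈ Q if and only if x ∈ {y_1, …, y_n}, and assume there are reals α_j > 0 and c_j > 0 such that for each j, v(x)/‖x − y_j‖^{α_j} → c_j as x → y_j. Then there exist constants K > 0 and C > 0 such that for every t ≥ 1, ∫_Q exp(−t v(z)) dz ≤ exp(−tK) + C ∑_{j=1}^n t^{−d/α_j}. -/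
/-!
Near each zero `y j` the potential dominates `(c j / 2) ‖x - y j‖ ^ α j`; away from neighbourhoods
of the zeros it is bounded below by some `K > 0`, by compactness. So `exp (-t v)` is at most
`exp (-t K)` plus a sum of translated stretched exponentials `exp (-t (c j / 2) ‖x - y j‖ ^ α j)`,
and scaling by `(t c j / 2) ^ (-1 / α j)` shows that the integral of the `j`-th one over the whole
space is a constant times `t ^ (-d / α j)`.
-/

open Filter MeasureTheory Set Real Topology

theorem EuclideanSpace.setOf_forall_mem_eq_preimage_pi {ι : Type*} (s : ι → Set ℝ) :
    {x : EuclideanSpace ℝ ι | ∀ i, x i ∈ s i} = WithLp.ofLp ⁻¹' univ.pi s := by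
  ext x; simp only [mem_ofPred_eq, mem_preimage, mem_univ_pi]

theorem EuclideanSpace.isCompact_setOf_forall_mem_Icc {ι : Type*} (a b : ι → ℝ) :
    IsCompact {x : EuclideanSpace ℝ ι | ∀ i, x i ∈ Icc (a i) (b i)} := by
  rw [setOf_forall_mem_eq_preimage_pi]
  exact (PiLp.homeomorph 2 fun _ : ι => ℝ).isCompact_preimage.2
    (isCompact_univ_pi fun _ => isCompact_Icc)

theorem EuclideanSpace.volume_setOf_forall_mem_Icc {ι : Type*} [Fintype ι] (a b : ι → ℝ) :
    volume {x : EuclideanSpace ℝ ι | ∀ i, x i ∈ Icc (a i) (b i)} =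
      ∏ i, ENNReal.ofReal (b i - a i) := by
  rw [setOf_forall_mem_eq_preimage_pi, (PiLp.volume_preserving_ofLp ι).measure_preimage
    (MeasurableSet.univ_pi fun _ => measurableSet_Icc).nullMeasurableSet, volume_pi_pi]
  simp only [Real.volume_Icc]

section StretchedExponential

variable {E : Type*} [NormedAddCommGroup E] [NormedSpace ℝ E] [FiniteDimensional ℝ E]
  [MeasurableSpace E] [BorelSpace E] (μ : Measure E) [μ.IsAddHaarMeasure]

theorem integrable_exp_neg_mul_rpow_norm {b p : ℝ} (hb : 0 < b) (hp : 0 < p) :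
    Integrable (fun x : E => exp (-(b * ‖x‖ ^ p))) μ := by
  rcases subsingleton_or_nontrivial E with hE | hE
  · exact Integrable.of_finite
  · rw [integrable_fun_norm_addHaar μ (f := fun r => exp (-(b * r ^ p)))]
    refine (integrableOn_rpow_mul_exp_neg_mul_rpow (s := (Module.finrank ℝ E - 1 : ℕ))
      (neg_one_lt_zero.trans_le (Nat.cast_nonneg _)) hp hb).congr_fun (fun r _ => ?_)
      measurableSet_Ioi
    simp [neg_mul]

theorem integral_exp_neg_mul_rpow_norm {b p : ℝ} (hb : 0 < b) (hp : 0 < p) :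
    ∫ x, exp (-(b * ‖x‖ ^ p)) ∂μ =
      b ^ (-(Module.finrank ℝ E : ℝ) / p) * ∫ x, exp (-‖x‖ ^ p) ∂μ := by
  have hR : 0 ≤ b ^ (-1 / p) := by positivity
  have hscale : ∀ x : E, b * ‖b ^ (-1 / p) • x‖ ^ p = ‖x‖ ^ p := fun x => by
    rw [norm_smul, norm_of_nonneg hR, mul_rpow hR (norm_nonneg x), ← rpow_mul hb.le,
      div_mul_cancel₀ _ hp.ne', rpow_neg_one, mul_inv_cancel_left₀ hb.ne']
  have h := Measure.integral_comp_smul_of_nonneg μ (fun x => exp (-(b * ‖x‖ ^ p))) (b ^ (-1 / p))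
    (hR := hR)
  simp only [hscale, smul_eq_mul] at h
  have hpow : (b ^ (-1 / p)) ^ Module.finrank ℝ E = b ^ (-(Module.finrank ℝ E : ℝ) / p) := by
    rw [← rpow_natCast, ← rpow_mul hb.le]; ring_nf
  rw [h, hpow, mul_inv_cancel_left₀ (by positivity)]

theorem setIntegral_exp_neg_mul_rpow_norm_sub_le (s : Set E) (y : E) {b p : ℝ} (hb : 0 < b)
    (hp : 0 < p) :
    ∫ x in s, exp (-(b * ‖x - y‖ ^ p)) ∂μ ≤
      b ^ (-(Module.finrank ℝ E : ℝ) / p) * ∫ x, exp (-‖x‖ ^ p) ∂μ :=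
  calc ∫ x in s, exp (-(b * ‖x - y‖ ^ p)) ∂μ ≤ ∫ x, exp (-(b * ‖x - y‖ ^ p)) ∂μ :=
        setIntegral_le_integral ((integrable_exp_neg_mul_rpow_norm μ hb hp).comp_sub_right y)
          (.of_forall fun _ => (exp_pos _).le)
    _ = _ := by
      rw [integral_sub_right_eq_self (fun x => exp (-(b * ‖x‖ ^ p))) y,
        integral_exp_neg_mul_rpow_norm μ hb hp]

end StretchedExponential
theorem eventually_mul_rpow_le_of_tendsto {E : Type*} [NormedAddCommGroup E] {v : E → ℝ} {y : E}
    {α b c : ℝ} (hlim : Tendsto (fun x => v x / ‖x - y‖ ^ α) (𝓝[≠] y) (𝓝 c)) (hbc : b < c)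
    (hα : 0 < α) : ∀ᶠ x in 𝓝 y, 0 ≤ v x → b * ‖x - y‖ ^ α ≤ v x := by
  have h := eventually_nhdsWithin_iff.1 (hlim.eventually (lt_mem_nhds hbc))
  filter_upwards [h] with x hx hvx
  rcases eq_or_ne x y with rfl | hne
  · simpa [zero_rpow hα.ne'] using hvx
  · exact ((lt_div_iff₀ (rpow_pos_of_pos (norm_sub_pos_iff.2 hne) _)).1 (hx hne)).le

theorem IsCompact.exists_pos_forall_le_or {X ι : Type*} [TopologicalSpace X] {K : Set X}
    (hK : IsCompact K) {v : X → ℝ} (hv : ContinuousOn v K) (hv0 : ∀ x ∈ K, 0 ≤ v x)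
    {y : ι → X} (hzero : ∀ x ∈ K, v x = 0 → ∃ j, x = y j) {P : ι → X → Prop}
    (hP : ∀ j, ∀ᶠ x in 𝓝 (y j), P j x) : ∃ ε > 0, ∀ x ∈ K, ε ≤ v x ∨ ∃ j, P j x := by
  set U := ⋃ j, interior {x | P j x}
  have hpos : ∀ x ∈ K \ U, 0 < v x := fun x hx => (hv0 x hx.1).lt_of_ne' fun h0 => by
    obtain ⟨j, rfl⟩ := hzero x hx.1 h0
    exact hx.2 (mem_iUnion.2 ⟨j, mem_interior_iff_mem_nhds.2 (hP j)⟩)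
  obtain ⟨ε, hε, hεv⟩ := (hK.diff (isOpen_iUnion fun _ => isOpen_interior)).exists_forall_le'
    (hv.mono sdiff_subset) hpos
  refine ⟨ε, hε, fun x hx => ?_⟩
  by_cases hxU : x ∈ U
  · obtain ⟨j, hj⟩ := mem_iUnion.1 hxU
    exact Or.inr ⟨j, interior_subset hj⟩
  · exact Or.inl (hεv x ⟨hx, hxU⟩)

theorem exp_neg_mul_le_add_sum {ι : Type*} [Fintype ι] {t ε v : ℝ} {w : ι → ℝ} (ht : 0 ≤ t)
    (h : ε ≤ v ∨ ∃ j, w j ≤ v) :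
    exp (-(t * v)) ≤ exp (-(t * ε)) + ∑ j, exp (-(t * w j)) := by
  have hanti : ∀ {a b : ℝ}, a ≤ b → exp (-(t * b)) ≤ exp (-(t * a)) := fun hab =>
    exp_le_exp.2 (neg_le_neg (mul_le_mul_of_nonneg_left hab ht))
  rcases h with hv | ⟨j, hj⟩
  · exact le_add_of_le_of_nonneg (hanti hv) (Finset.sum_nonneg fun _ _ => (exp_pos _).le)
  · exact le_add_of_nonneg_of_le (exp_pos _).le
      ((hanti hj).trans (Finset.single_le_sum (fun i _ => (exp_pos (-(t * w i))).le)
        (Finset.mem_univ j)))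

theorem IsCompact.exists_setIntegral_exp_neg_mul_le {E : Type*} [NormedAddCommGroup E]
    [NormedSpace ℝ E] [FiniteDimensional ℝ E] [MeasurableSpace E] [BorelSpace E]
    (μ : Measure E) [μ.IsAddHaarMeasure] {K : Set E} (hK : IsCompact K) {v : E → ℝ}
    (hv : ContinuousOn v K) (hv0 : ∀ x ∈ K, 0 ≤ v x) {ι : Type*} [Fintype ι] {y : ι → E}
    (hzero : ∀ x ∈ K, v x = 0 → ∃ j, x = y j) {α c : ι → ℝ} (hα : ∀ j, 0 < α j)
    (hc : ∀ j, 0 < c j)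
    (hlim : ∀ j, Tendsto (fun x => v x / ‖x - y j‖ ^ α j) (𝓝[≠] y j) (𝓝 (c j))) :
    ∃ ε > 0, ∃ C ≥ 0, ∀ t > 0, ∫ z in K, exp (-(t * v z)) ∂μ ≤
      μ.real K * exp (-(t * ε)) + C * ∑ j, t ^ (-(Module.finrank ℝ E : ℝ) / α j) := by
  obtain ⟨ε, hε, hsplit⟩ := hK.exists_pos_forall_le_or hv hv0 hzero fun j =>
    eventually_mul_rpow_le_of_tendsto (hlim j) (half_lt_self (hc j)) (hα j)
  set D : ι → ℝ := fun j => (c j / 2) ^ (-(Module.finrank ℝ E : ℝ) / α j) *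
    ∫ x, exp (-‖x‖ ^ α j) ∂μ
  have hD : ∀ j, 0 ≤ D j := fun j =>
    mul_nonneg (by have := hc j; positivity) (integral_nonneg fun _ => (exp_pos _).le)
  refine ⟨ε, hε, ∑ j, D j, Finset.sum_nonneg fun j _ => hD j, fun t ht => ?_⟩
  set g : ι → E → ℝ := fun j x => exp (-(t * (c j / 2 * ‖x - y j‖ ^ α j)))
  have hg : ∀ j, Integrable (g j) μ := fun j => by
    simpa only [g, mul_assoc] using (integrable_exp_neg_mul_rpow_norm μ
      (mul_pos ht (half_pos (hc j))) (hα j)).comp_sub_right (y j)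
  have hg_le : ∀ j, ∫ x in K, g j x ∂μ ≤ D j * t ^ (-(Module.finrank ℝ E : ℝ) / α j) := fun j => by
    have := setIntegral_exp_neg_mul_rpow_norm_sub_le μ K (y j) (mul_pos ht (half_pos (hc j))) (hα j)
    rw [mul_rpow ht.le (half_pos (hc j)).le] at this
    simp only [g, D, ← mul_assoc]
    linarith
  have hconst : IntegrableOn (fun _ => exp (-(t * ε))) K μ := integrableOn_const hK.measure_ne_top
  have hsum : IntegrableOn (fun z => ∑ j, g j z) K μ :=
    (integrable_finsetSum _ fun j _ => hg j).integrableOn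
  calc ∫ z in K, exp (-(t * v z)) ∂μ ≤ ∫ z in K, (exp (-(t * ε)) + ∑ j, g j z) ∂μ := by
        refine setIntegral_mono_on ?_ ?_ hK.measurableSet fun x hx =>
          exp_neg_mul_le_add_sum ht.le ((hsplit x hx).imp_right fun ⟨j, hj⟩ => ⟨j, hj (hv0 x hx)⟩)
        · exact ((hv.const_smul t).neg).rexp.integrableOn_compact hK
        · exact hconst.add hsum
    _ = μ.real K * exp (-(t * ε)) + ∑ j, ∫ z in K, g j z ∂μ := by
        rw [integral_add hconst hsum, setIntegral_const,
          integral_finsetSum _ fun j _ => (hg j).integrableOn, smul_eq_mul]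
    _ ≤ μ.real K * exp (-(t * ε)) + ∑ j, D j * t ^ (-(Module.finrank ℝ E : ℝ) / α j) := by
        gcongr with j; exact hg_le j
    _ ≤ μ.real K * exp (-(t * ε)) + (∑ j, D j) * ∑ j, t ^ (-(Module.finrank ℝ E : ℝ) / α j) := by
        rw [Finset.mul_sum]
        gcongr with j
        exact Finset.single_le_sum (fun i _ => hD i) (Finset.mem_univ j)

theorem laplace_estimate_weak_potential_general
    (d : ℕ)
    (Q : Set (EuclideanSpace ℝ (Fin d)))
    (hQ : Q = {x : EuclideanSpace ℝ (Fin d) | ∀ j, |x j| ≤ 1 / 2})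
    (v : EuclideanSpace ℝ (Fin d) → ℝ)
    (hv_cont : ContinuousOn v Q) (hv_nonneg : ∀ x ∈ Q, 0 ≤ v x)
    (n : ℕ) (y : Fin n → EuclideanSpace ℝ (Fin d))
    (hzeros : ∀ x ∈ Q, (v x = 0 ↔ ∃ j, x = y j))
    (α c : Fin n → ℝ) (hα : ∀ j, 0 < α j) (hc : ∀ j, 0 < c j)
    (hlim : ∀ j, Tendsto (fun x => v x / ‖x - y j‖ ^ (α j))
      (nhdsWithin (y j) {y j}ᶜ) (nhds (c j))) :
    ∃ K > (0 : ℝ), ∃ C > (0 : ℝ), ∀ t : ℝ, 1 ≤ t →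
      ∫ z in Q, Real.exp (-(t * v z)) ≤
        Real.exp (-(t * K)) + C * ∑ j, t ^ (-(d : ℝ) / α j) := by
  have hQ_Icc : Q = {x : EuclideanSpace ℝ (Fin d) | ∀ j, x j ∈ Icc (-(1 / 2)) (1 / 2)} := by
    simp only [hQ, mem_Icc, abs_le]
  have hQ_vol : volume.real Q = 1 := by
    rw [measureReal_def, hQ_Icc, EuclideanSpace.volume_setOf_forall_mem_Icc]
    norm_num
  have hQ_compact : IsCompact Q := hQ_Icc ▸ EuclideanSpace.isCompact_setOf_forall_mem_Icc _ _
  obtain ⟨K, hK, C, hC, hbound⟩ := hQ_compact.exists_setIntegral_exp_neg_mul_le volume hv_cont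
    hv_nonneg (fun x hx => (hzeros x hx).1) hα hc hlim
  refine ⟨K, hK, C + 1, by positivity, fun t ht => ?_⟩
  have hsum : 0 ≤ ∑ j, t ^ (-(d : ℝ) / α j) := Finset.sum_nonneg fun j _ => by positivity
  calc ∫ z in Q, exp (-(t * v z)) ≤ exp (-(t * K)) + C * ∑ j, t ^ (-(d : ℝ) / α j) := by
        simpa [hQ_vol] using hbound t (by linarith)
    _ ≤ exp (-(t * K)) + (C + 1) * ∑ j, t ^ (-(d : ℝ) / α j) := by gcongr; linarith

/-- Laplace-type estimate: for a weak external potential `v`, nonnegative and continuous on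
the closed unit cube `Q`, vanishing exactly at interior points `y j` near which
`v(x) ~ c j ‖x - y j‖^{α j}`, there are `K > 0` and `C > 0` such that for every `t ≥ 1`,
`∫_Q exp (-t v) ≤ exp (-t K) + C ∑ j, t^{-d/α j}`. -/
theorem laplace_estimate_weak_potential
    (d : ℕ) (hd : 1 ≤ d)
    (Q : Set (EuclideanSpace ℝ (Fin d)))
    (hQ : Q = {x : EuclideanSpace ℝ (Fin d) | ∀ j, |x j| ≤ 1 / 2})
    (v : EuclideanSpace ℝ (Fin d) → ℝ)
    (hv_cont : ContinuousOn v Q) (hv_nonneg : ∀ x ∈ Q, 0 ≤ v x)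
    (n : ℕ) (hn : 1 ≤ n) (y : Fin n → EuclideanSpace ℝ (Fin d))
    (hy_distinct : Function.Injective y)
    (hy_interior : ∀ j, ∀ i, |y j i| < 1 / 2)
    (hzeros : ∀ x ∈ Q, (v x = 0 ↔ ∃ j, x = y j))
    (α c : Fin n → ℝ) (hα : ∀ j, 0 < α j) (hc : ∀ j, 0 < c j)
    (hlim : ∀ j, Tendsto (fun x => v x / ‖x - y j‖ ^ (α j))
      (nhdsWithin (y j) {y j}ᶜ) (nhds (c j))) :
    ∃ K > (0 : ℝ), ∃ C > (0 : ℝ), ∀ t : ℝ, 1 ≤ t →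
      ∫ z in Q, Real.exp (-(t * v z)) ≤
        Real.exp (-(t * K)) + C * ∑ j, t ^ (-(d : ℝ) / α j) :=
  laplace_estimate_weak_potential_general d Q hQ v hv_cont hv_nonneg n y hzeros α c hα hc hlim
end
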